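/- Let X be an ℝ^d-valued random vector whose distribution is α-symmetric for some α ∈ (0,1] (u⬝X has the same distribution as ‖u‖_α X₁ for all u), and suppose the CDF F of X₁ is continuous. Then the halfspace depth of x with respect to the law of X equals F(-‖x‖_∞) for all x ∈ ℝ^d; in particular this value does not depend on α. -/

import Mathlib

/-!
Under `α`-symmetry the halfspace `{z | u ⬝ z ≤ u ⬝ x}` has mass `F (u ⬝ x / ‖u‖_α)`, so, `F` being
nondecreasing, the depth is `F` at the infimum of `u ⬝ x / ‖u‖_α` over `u ≠ 0`. Since `t ↦ t ^ α`
is subadditive for `α ≤ 1`, `‖u‖_1 ≤ ‖u‖_α`, and Hölder's inequality gives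
`u ⬝ x ≥ -‖u‖_1 ‖x‖_∞ ≥ -‖u‖_α ‖x‖_∞`. The bound is attained at `u = ∓ eⱼ`, where `j` maximises
`|xⱼ|`.
-/

open MeasureTheory

/-- The `ℓ^α` quasi-norm `(∑ᵢ |uᵢ|^α)^(1/α)` on `ℝ^d`. -/
noncomputable def alphaNorm {d : ℕ} (α : ℝ) (u : Fin d → ℝ) : ℝ :=
    (∑ i, |u i| ^ α) ^ (1 / α)

/-- The halfspace (Tukey) depth of `x` with respect to a measure `P` on `ℝ^d`. -/
noncomputable def halfspaceDepth {d : ℕ} (x : Fin d → ℝ) (P : Measure (Fin d → ℝ)) : ℝ :=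
    ⨅ u : {u : Fin d → ℝ // u ≠ 0}, (P {z | ∑ i, u.1 i * z i ≤ ∑ i, u.1 i * x i}).toReal

lemma Real.rpow_sum_le_sum_rpow {ι : Type*} (s : Finset ι) {f : ι → ℝ} (hf : ∀ i ∈ s, 0 ≤ f i)
    {p : ℝ} (hp : 0 < p) (hp1 : p ≤ 1) : (∑ i ∈ s, f i) ^ p ≤ ∑ i ∈ s, f i ^ p :=
  Finset.le_sum_of_subadditive_on_pred (· ^ p) (0 ≤ ·) (Real.zero_rpow hp.ne').le
    (fun _ _ ha hb => Real.rpow_add_le_add_rpow ha hb hp.le hp1) (fun _ _ => add_nonneg) f hf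

section alphaNorm

variable {d : ℕ} {α : ℝ}

lemma alphaNorm_pos {u : Fin d → ℝ} (hu : u ≠ 0) : 0 < alphaNorm α u := by
  obtain ⟨i, hi⟩ := Function.ne_iff.mp hu
  exact Real.rpow_pos_of_pos (Finset.sum_pos' (fun j _ => by positivity)
    ⟨i, Finset.mem_univ i, Real.rpow_pos_of_pos (abs_pos.mpr hi) α⟩) _

lemma alphaNorm_single (hα : α ≠ 0) (j : Fin d) (c : ℝ) : alphaNorm α (Pi.single j c) = |c| := by
  simp only [alphaNorm, Pi.single_apply, apply_ite abs, apply_ite (· ^ α), abs_zero,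
    Real.zero_rpow hα, Finset.sum_ite_eq', Finset.mem_univ, if_true]
  rw [one_div, Real.rpow_rpow_inv (abs_nonneg c) hα]

lemma sum_abs_le_alphaNorm (hα₀ : 0 < α) (hα₁ : α ≤ 1) (u : Fin d → ℝ) :
    ∑ i, |u i| ≤ alphaNorm α u := by
  have hnn : 0 ≤ ∑ i, |u i| := Finset.sum_nonneg fun i _ => abs_nonneg _
  calc ∑ i, |u i| = ((∑ i, |u i|) ^ α) ^ (1 / α) := by
        rw [← Real.rpow_mul hnn, mul_one_div_cancel hα₀.ne', Real.rpow_one]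
    _ ≤ alphaNorm α u := Real.rpow_le_rpow (by positivity)
        (Real.rpow_sum_le_sum_rpow _ (fun i _ => abs_nonneg _) hα₀ hα₁) (by positivity)

lemma neg_alphaNorm_mul_iSup_abs_le_sum_mul (hα₀ : 0 < α) (hα₁ : α ≤ 1) (u x : Fin d → ℝ) :
    -(alphaNorm α u * ⨆ i, |x i|) ≤ ∑ i, u i * x i := by
  have hx : ∀ i, |x i| ≤ ⨆ i, |x i| := le_ciSup (Set.finite_range _).bddAbove
  have hS : 0 ≤ ⨆ i, |x i| := Real.iSup_nonneg fun i => abs_nonneg (x i)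
  calc -(alphaNorm α u * ⨆ i, |x i|) ≤ -((∑ i, |u i|) * ⨆ i, |x i|) := by
        gcongr; exact sum_abs_le_alphaNorm hα₀ hα₁ u
    _ = ∑ i, -(|u i| * ⨆ i, |x i|) := by rw [Finset.sum_mul, Finset.sum_neg_distrib]
    _ ≤ ∑ i, u i * x i := Finset.sum_le_sum fun i _ => by
        have := mul_le_mul_of_nonneg_left (hx i) (abs_nonneg (u i))
        linarith [neg_abs_le (u i * x i), abs_mul (u i) (x i)]

lemma exists_alphaNorm_eq_one_sum_mul_eq_neg_iSup_abs [Nonempty (Fin d)] (hα : α ≠ 0)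
    (x : Fin d → ℝ) : ∃ u : Fin d → ℝ, u ≠ 0 ∧ alphaNorm α u = 1 ∧
      ∑ i, u i * x i = -⨆ i, |x i| := by
  obtain ⟨j, hj⟩ := exists_eq_ciSup_of_finite (f := fun i => |x i|)
  obtain ⟨c, hc, hcx⟩ : ∃ c : ℝ, |c| = 1 ∧ c * x j = -|x j| := by
    rcases le_or_gt 0 (x j) with h | h
    · exact ⟨-1, by simp, by rw [abs_of_nonneg h]; ring⟩
    · exact ⟨1, by simp, by rw [abs_of_neg h]; ring⟩
  refine ⟨Pi.single j c, ?_, by rw [alphaNorm_single hα, hc], ?_⟩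
  · rw [Ne, Pi.single_eq_zero_iff, ← abs_eq_zero, hc]
    exact one_ne_zero
  · rw [← hj, ← hcx]
    exact single_dotProduct x c j

end alphaNorm

lemma measure_le_eq_of_map_eq_const_mul {Ω : Type*} [MeasurableSpace Ω] {P : Measure Ω}
    {f g : Ω → ℝ} (hf : Measurable f) (hg : Measurable g) {c : ℝ} (hc : 0 < c)
    (hmap : P.map f = P.map (fun ω => c * g ω)) (t : ℝ) :
    P {ω | f ω ≤ t} = P {ω | g ω ≤ t / c} := by
  have h := congrArg (· (Set.Iic t)) hmap
  simp only [Measure.map_apply hf measurableSet_Iic,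
    Measure.map_apply (hg.const_mul c) measurableSet_Iic] at h
  exact h.trans (congrArg P (Set.ext fun ω => (le_div_iff₀' hc).symm))

theorem depth_of_alphaSymmetric_eq_F_neg_supnorm_general (d : ℕ) (hd : 1 ≤ d)
    (α : ℝ) (hα₀ : 0 < α) (hα₁ : α ≤ 1)
    (P : Measure (Fin d → ℝ)) [IsProbabilityMeasure P]
    (hsym : ∀ u : Fin d → ℝ,
      Measure.map (fun z => ∑ i, u i * z i) P
        = Measure.map (fun z => alphaNorm α u * z ⟨0, hd⟩) P)
    (F : ℝ → ℝ) (hFdef : ∀ s, F s = (P {z | z ⟨0, hd⟩ ≤ s}).toReal)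
    (x : Fin d → ℝ) :
    halfspaceDepth x P = F (-(⨆ i, |x i|)) := by
  have : Nonempty (Fin d) := ⟨⟨0, hd⟩⟩
  have hFmono : Monotone F := fun s t hst => by
    rw [hFdef, hFdef]
    exact measureReal_mono fun z hz => le_trans hz hst
  have hprob : ∀ u : Fin d → ℝ, u ≠ 0 → (P {z | ∑ i, u i * z i ≤ ∑ i, u i * x i}).toReal
      = F ((∑ i, u i * x i) / alphaNorm α u) := fun u hu => by
    rw [hFdef, measure_le_eq_of_map_eq_const_mul (by fun_prop) (by fun_prop) (alphaNorm_pos hu)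
      (hsym u)]
  obtain ⟨u₀, hu₀, hnorm, hdot⟩ := exists_alphaNorm_eq_one_sum_mul_eq_neg_iSup_abs hα₀.ne' x
  have : Nonempty {u : Fin d → ℝ // u ≠ 0} := ⟨⟨u₀, hu₀⟩⟩
  unfold halfspaceDepth
  refine le_antisymm (ciInf_le_of_le ⟨0, Set.forall_mem_range.2 fun _ => ENNReal.toReal_nonneg⟩
    ⟨u₀, hu₀⟩ ?_) (le_ciInf fun u => ?_)
  · rw [hprob u₀ hu₀, hnorm, hdot, div_one]
  · rw [hprob u.1 u.2]
    refine hFmono ((le_div_iff₀ (alphaNorm_pos u.2)).2 ?_)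
    linarith [neg_alphaNorm_mul_iSup_abs_le_sum_mul hα₀ hα₁ u.1 x]

theorem depth_of_alphaSymmetric_eq_F_neg_supnorm (d : ℕ) (hd : 1 ≤ d)
    (α : ℝ) (hα₀ : 0 < α) (hα₁ : α ≤ 1)
    (P : Measure (Fin d → ℝ)) [IsProbabilityMeasure P]
    (hsym : ∀ u : Fin d → ℝ,
      Measure.map (fun z => ∑ i, u i * z i) P
        = Measure.map (fun z => alphaNorm α u * z ⟨0, hd⟩) P)
    (F : ℝ → ℝ) (hFdef : ∀ s, F s = (P {z | z ⟨0, hd⟩ ≤ s}).toReal)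
    (hF : Continuous F) (x : Fin d → ℝ) :
    halfspaceDepth x P = F (-(⨆ i, |x i|)) :=
  depth_of_alphaSymmetric_eq_F_neg_supnorm_general d hd α hα₀ hα₁ P hsym F hFdef x
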